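/- arXiv:2604.25637 — 2 statements merged into one kernel-verified Lean document; each statement's English description precedes it below -/
import Mathlib

section
/- Let n ≥ 3 and E = ℤ/nℤ. Define a triple {i,j,k} of distinct elements of E to be dependent iff i + j + k ≡ 0 (mod n), and call all 3-element subsets not of this form bases. Then this collection of bases satisfies the basis exchange axiom: for any two bases A, B and any a ∈ A \ B, there exists b ∈ B \ A such that (A \ {a}) ∪ {b} is a basis. -/
/-!
Replacing `a ∈ A` by `b ∉ A` changes the sum of `A` by `b - a`, so it produces a non-basis
for exactly one value `b = a - ∑ A`. If that value were the only element of `B \ A`, then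
`|B \ A| = |A \ B|` forces `B = (A \ {a}) ∪ {b}`, whose sum is `0`, contradicting that `B`
is a basis.
-/

open Finset

namespace Finset

variable {α : Type*} [DecidableEq α] {s t : Finset α} {a b : α}

theorem card_insert_erase_of_notMem (ha : a ∈ s) (hb : b ∉ s) :
    #(insert b (s.erase a)) = #s := by
  rw [card_insert_of_notMem (fun h ↦ hb (mem_of_mem_erase h)), card_erase_add_one ha]

theorem sum_insert_erase_of_notMem {β : Type*} [AddCommGroup β] (f : α → β) (ha : a ∈ s)
    (hb : b ∉ s) : (insert b (s.erase a)).sum f = s.sum f - f a + f b := by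
  rw [sum_insert (fun h ↦ hb (mem_of_mem_erase h)), sum_erase_eq_sub ha, add_comm]

theorem sdiff_nonempty_of_card_eq (hcard : #s = #t) (ha : a ∈ s \ t) : (t \ s).Nonempty := by
  rw [← card_pos, ← card_sdiff_comm hcard]
  exact card_pos.mpr ⟨a, ha⟩

theorem eq_insert_erase_of_sdiff_subset_singleton (hcard : #s = #t) (ha : a ∈ s \ t)
    (hb : t \ s ⊆ {b}) : t = insert b (s.erase a) := by
  have hts : t \ s = {b} :=
    eq_of_subset_of_card_le hb (by simpa using sdiff_nonempty_of_card_eq hcard ha)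
  have hst : s \ t = {a} := by
    refine (eq_of_subset_of_card_le (singleton_subset_iff.mpr ha) ?_).symm
    rw [card_sdiff_comm hcard, hts, card_singleton, card_singleton]
  ext x
  have hx_ts := congrArg (x ∈ ·) hts
  have hx_st := congrArg (x ∈ ·) hst
  simp only [mem_sdiff, mem_singleton, eq_iff_iff] at hx_ts hx_st
  simp only [mem_insert, mem_erase]
  tauto

end Finset

theorem Tn_basis_exchange_general (n : ℕ)
    (A B : Finset (ZMod n))
    (hA : A.card = 3 ∧ A.sum id ≠ 0)
    (hB : B.card = 3 ∧ B.sum id ≠ 0)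
    (a : ZMod n) (ha : a ∈ A \ B) :
    ∃ b ∈ B \ A,
      (insert b (A.erase a)).card = 3 ∧ (insert b (A.erase a)).sum id ≠ 0 := by
  obtain ⟨hA_card, hA_sum⟩ := hA
  obtain ⟨hB_card, hB_sum⟩ := hB
  have haA : a ∈ A := (mem_sdiff.mp ha).1
  have hcard : #A = #B := hA_card.trans hB_card.symm
  by_cases hgood : ∃ b ∈ B \ A, b ≠ a - A.sum id
  · obtain ⟨b, hb, hb_ne⟩ := hgood
    have hbA : b ∉ A := (mem_sdiff.mp hb).2
    refine ⟨b, hb, by rw [card_insert_erase_of_notMem haA hbA, hA_card], ?_⟩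
    rw [sum_insert_erase_of_notMem id haA hbA, id_eq, id_eq]
    intro h0
    exact hb_ne (by linear_combination h0)
  · push Not at hgood
    obtain ⟨c, hc⟩ := sdiff_nonempty_of_card_eq hcard ha
    have hc_eq : c = a - A.sum id := hgood c hc
    have hB_eq : B = insert c (A.erase a) :=
      eq_insert_erase_of_sdiff_subset_singleton hcard ha
        fun b hb ↦ mem_singleton.mpr ((hgood b hb).trans hc_eq.symm)
    refine absurd ?_ hB_sum
    rw [hB_eq, sum_insert_erase_of_notMem id haA (mem_sdiff.mp hc).2, hc_eq]
    simp

/-- Basis exchange axiom for the matroid `T_n`: bases are 3-element subsets of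
`ℤ/nℤ` whose elements do not sum to `0`. -/
theorem Tn_basis_exchange (n : ℕ) (hn : 3 ≤ n) [NeZero n]
    (A B : Finset (ZMod n))
    (hA : A.card = 3 ∧ A.sum id ≠ 0)
    (hB : B.card = 3 ∧ B.sum id ≠ 0)
    (a : ZMod n) (ha : a ∈ A \ B) :
    ∃ b ∈ B \ A,
      (insert b (A.erase a)).card = 3 ∧ (insert b (A.erase a)).sum id ≠ 0 :=
  Tn_basis_exchange_general n A B hA hB a ha
end

section
/- Let g ∈ ℂ[x,y,z] be nonzero homogeneous of degree d−1 ≥ 2, f = w·g, and let D' be the ℂ[x,y,z,w]-submodule of syzygies of (f_x,f_y,f_z,f_w) generated by the lifts (a,b,c,0) of all syzygies (a,b,c) of (g_x,g_y,g_z) together with ρ₀ = (x,y,z,−(d−1)w). Then every syzygy of (f_x,f_y,f_z,f_w) lies in D'. That is, ρ₀ and the lifted syzygies of g generate the module D₀(f) of derivations annihilating f. -/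
/-!
Write `w = X (Fin.last n)` and `G = rename Fin.castSucc g`, so that `∂f = (w ∂G, G)`. A syzygy
`v` of `∂f` satisfies `w ∑ vⱼ ∂ⱼG + v_w G = 0`; as `w` is prime and does not divide `G ≠ 0`,
`v_w = w t`. Euler's identity `∑ xⱼ ∂ⱼG = e G` then shows that `v + (t / e) ρ₀` has last entry
zero and its other entries form a syzygy of `∂G` over `ℂ[x,y,z,w]`. Expanding that syzygy in
powers of `w`, every coefficient is a syzygy of `∂g` over `ℂ[x,y,z]`.
-/

open MvPolynomial

namespace MvPolynomial

variable {R : Type*} [CommRing R] {n : ℕ}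

variable (R n) in
noncomputable def lastVarEquiv :
    MvPolynomial (Fin (n + 1)) R ≃ₐ[R] Polynomial (MvPolynomial (Fin n) R) :=
  (renameEquiv R finSuccEquivLast).trans (optionEquivLeft R (Fin n))

@[simp]
lemma lastVarEquiv_rename_castSucc (q : MvPolynomial (Fin n) R) :
    lastVarEquiv R n (rename Fin.castSucc q) = Polynomial.C q := by
  induction q using MvPolynomial.induction_on with
  | C a => simp [lastVarEquiv]
  | add p q hp hq => simp only [map_add, hp, hq]
  | mul_X p i hp => simp_all [lastVarEquiv, finSuccEquivLast_castSucc]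

@[simp]
lemma lastVarEquiv_X_last : lastVarEquiv R n (X (Fin.last n)) = Polynomial.X := by
  simp [lastVarEquiv, finSuccEquivLast_last]

lemma X_last_dvd_rename_castSucc_iff {q : MvPolynomial (Fin n) R} :
    X (Fin.last n) ∣ rename Fin.castSucc q ↔ q = 0 := by
  rw [← map_dvd_iff (lastVarEquiv R n), lastVarEquiv_X_last, lastVarEquiv_rename_castSucc,
    Polynomial.X_dvd_iff, Polynomial.coeff_C_zero]

lemma mem_span_rename_syzygies {ι : Type*} [Fintype ι] (h : ι → MvPolynomial (Fin n) R)
    {p : ι → MvPolynomial (Fin (n + 1)) R} (hp : ∑ i, p i * rename Fin.castSucc (h i) = 0) :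
    p ∈ Submodule.span (MvPolynomial (Fin (n + 1)) R)
      ((fun s => rename Fin.castSucc ∘ s) '' {s | ∑ i, s i * h i = 0}) := by
  set c : ℕ → ι → MvPolynomial (Fin n) R := fun k i => (lastVarEquiv R n (p i)).coeff k
  have hc : ∀ k, ∑ i, c k i * h i = 0 := fun k => by
    simpa [c, Polynomial.finsetSum_coeff, Polynomial.coeff_mul_C] using
      congr_arg (fun q => (lastVarEquiv R n q).coeff k) hp
  set d : ι → ℕ := fun i => (lastVarEquiv R n (p i)).natDegree
  have hexp : p = ∑ k ∈ Finset.range (Finset.univ.sup d + 1),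
      (X (Fin.last n) : MvPolynomial (Fin (n + 1)) R) ^ k • (rename Fin.castSucc ∘ c k) := by
    funext i
    apply (lastVarEquiv R n).injective
    simp only [Finset.sum_apply, Pi.smul_apply, smul_eq_mul, Function.comp_apply, map_sum,
      map_mul, map_pow, lastVarEquiv_X_last, lastVarEquiv_rename_castSucc]
    rw [(lastVarEquiv R n (p i)).as_sum_range_C_mul_X_pow'
      (Nat.lt_succ_of_le (Finset.le_sup (f := d) (Finset.mem_univ i)))]
    simp only [mul_comm, c]
  rw [hexp]
  exact Submodule.sum_mem _ fun k _ =>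
    Submodule.smul_mem _ _ (Submodule.subset_span ⟨c k, hc k, rfl⟩)

lemma pderiv_castSucc_X_last_mul_rename (g : MvPolynomial (Fin n) R) (j : Fin n) :
    pderiv (Fin.castSucc j) (X (Fin.last n) * rename Fin.castSucc g) =
      X (Fin.last n) * rename Fin.castSucc (pderiv j g) := by
  rw [pderiv_mul, pderiv_X_of_ne (Fin.castSucc_lt_last j).ne', zero_mul, zero_add,
    pderiv_rename (Fin.castSucc_injective n)]

lemma pderiv_last_X_last_mul_rename (g : MvPolynomial (Fin n) R) :
    pderiv (Fin.last n) (X (Fin.last n) * rename Fin.castSucc g) = rename Fin.castSucc g := by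
  have hfree : pderiv (Fin.last n) (rename Fin.castSucc g) = 0 :=
    pderiv_eq_zero_of_notMem_vars fun h => by
      obtain ⟨j, _, hj⟩ := mem_vars_rename _ _ h
      exact (Fin.castSucc_lt_last j).ne hj
  rw [pderiv_mul, pderiv_X_self, one_mul, hfree, mul_zero, add_zero]

lemma exists_syzygy_of_syzygy_X_last_mul_rename {K : Type*} [Field K] {e : ℕ}
    (he : (e : K) ≠ 0)
    {g : MvPolynomial (Fin n) K} (hg0 : g ≠ 0) (hg : g.IsHomogeneous e)
    {v : Fin (n + 1) → MvPolynomial (Fin (n + 1)) K}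
    (hv : ∑ i, v i * pderiv i (X (Fin.last n) * rename Fin.castSucc g) = 0) :
    ∃ c, ∑ j, (v j.castSucc + c * X j.castSucc) * rename Fin.castSucc (pderiv j g) = 0 ∧
      v (Fin.last n) = c * (C (e : K) * X (Fin.last n)) := by
  simp only [Fin.sum_univ_castSucc, pderiv_castSucc_X_last_mul_rename,
    pderiv_last_X_last_mul_rename, mul_left_comm (v _) (X (Fin.last n)), ← Finset.mul_sum] at hv
  set G := rename Fin.castSucc g
  obtain ⟨t, ht⟩ : X (Fin.last n) ∣ v (Fin.last n) := by
    refine (X_prime.dvd_or_dvd ⟨-∑ j, v j.castSucc * rename Fin.castSucc (pderiv j g), ?_⟩)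
      |>.resolve_right (X_last_dvd_rename_castSucc_iff.not.mpr hg0)
    linear_combination hv
  have hcancel : ∑ j, v j.castSucc * rename Fin.castSucc (pderiv j g) + t * G = 0 :=
    (mul_eq_zero.mp (by linear_combination hv - G * ht : X (Fin.last n) * _ = 0)).resolve_left
      (X_ne_zero _)
  have heuler : ∑ j, X j.castSucc * rename Fin.castSucc (pderiv j g) = C (e : K) * G := by
    simpa [G, map_sum, nsmul_eq_mul] using congr_arg (rename Fin.castSucc) hg.sum_X_mul_pderiv
  have hinv : C (e : K)⁻¹ * C (e : K) = (1 : MvPolynomial (Fin (n + 1)) K) := by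
    rw [← C_mul, inv_mul_cancel₀ he, C_1]
  refine ⟨C (e : K)⁻¹ * t, ?_, ?_⟩
  · simp only [add_mul, Finset.sum_add_distrib, mul_assoc, ← Finset.mul_sum, heuler]
    linear_combination hcancel + t * G * hinv
  · linear_combination ht - X (Fin.last n) * t * hinv

end MvPolynomial

lemma Fin.snoc_zero_mem_span_image {R M : Type*} [Semiring R] [AddCommMonoid M] [Module R M]
    {n : ℕ} {s : Set (Fin n → M)} {u : Fin n → M} (hu : u ∈ Submodule.span R s) :
    (Fin.snoc u 0 : Fin (n + 1) → M) ∈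
      Submodule.span R ((fun w => (Fin.snoc w 0 : Fin (n + 1) → M)) '' s) := by
  let L : (Fin n → M) →ₗ[R] Fin (n + 1) → M :=
    { toFun := fun w => Fin.snoc w 0
      map_add' := fun a b => by ext i; refine Fin.lastCases ?_ (fun j => ?_) i <;> simp
      map_smul' := fun r a => by ext i; refine Fin.lastCases ?_ (fun j => ?_) i <;> simp }
  exact Submodule.apply_mem_span_image_of_mem_span L hu

/-- For `g ∈ ℂ[x,y,z]` nonzero homogeneous of degree `e = d-1 ≥ 2` and
`f = w·g`, every Jacobian syzygy of `f` lies in the submodule generated by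
`ρ₀ = (x,y,z,−e·w)` together with the lifts `(a,b,c,0)` of the Jacobian
syzygies of `g`. -/
theorem cone_syzygies_generated (e : ℕ) (he : 2 ≤ e)
    (g : MvPolynomial (Fin 3) ℂ) (hg0 : g ≠ 0) (hg : g.IsHomogeneous e)
    (f : MvPolynomial (Fin 4) ℂ)
    (hf : f = X 3 * rename Fin.castSucc g)
    (v : Fin 4 → MvPolynomial (Fin 4) ℂ)
    (hv : ∑ i, v i * pderiv i f = 0) :
    v ∈ Submodule.span (MvPolynomial (Fin 4) ℂ)
      (insert (![X 0, X 1, X 2, - C (e : ℂ) * X 3])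
        {u : Fin 4 → MvPolynomial (Fin 4) ℂ |
          ∃ a b c : MvPolynomial (Fin 3) ℂ,
            a * pderiv 0 g + b * pderiv 1 g + c * pderiv 2 g = 0 ∧
            u = ![rename Fin.castSucc a, rename Fin.castSucc b,
                  rename Fin.castSucc c, 0]}) := by
  subst hf
  obtain ⟨c, hsyz, hlast⟩ := exists_syzygy_of_syzygy_X_last_mul_rename
    (by exact_mod_cast (show e ≠ 0 by omega)) hg0 hg hv
  set a := fun j : Fin 3 => v j.castSucc + c * X j.castSucc
  have hv_eq : v = Fin.snoc a 0 - c • ![X 0, X 1, X 2, -C (e : ℂ) * X 3] := by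
    funext j
    fin_cases j
    · simp [a, Fin.snoc]
    · simp [a, Fin.snoc]
    · simp [a, Fin.snoc]
    · simpa [Fin.snoc] using hlast
  rw [hv_eq]
  refine Submodule.sub_mem _ ?_
    (Submodule.smul_mem _ _ (Submodule.subset_span (Set.mem_insert _ _)))
  refine Submodule.span_mono ?_ (Fin.snoc_zero_mem_span_image (mem_span_rename_syzygies _ hsyz))
  rintro _ ⟨_, ⟨s, hs, rfl⟩, rfl⟩
  refine Set.mem_insert_of_mem _ ⟨s 0, s 1, s 2, by simpa [Fin.sum_univ_three] using hs, ?_⟩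
  funext j
  fin_cases j <;> rfl
end
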